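/- arXiv:1406.2008 — 8 statements merged into one kernel-verified Lean document; each statement's English description precedes it below -/
import Mathlib

section
/- Suppose the two agents can meet inside an edge at time T, in the following sense: there exist adjacent vertices v_A and v_B with e = {v_A, v_B} ∈ E, and real numbers t_A, t_B, T with d_A(s_A, v_A) ≤ t_A ≤ T, d_B(s_B, v_B) ≤ t_B ≤ T, and (T − t_A)/w_A(e) + (T − t_B)/w_B(e) = 1 (the agents enter e from opposite endpoints at times t_A and t_B and pass each other at time T). Then there exists a vertex u with T_RV(u) ≤ 2T; equivalently, the rendezvous node u satisfies T_RV(u) ≤ 2T. -/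
open SimpleGraph

/-- The weighted shortest-path distance from `u` to `v` in `G` with edge weights `w`:
the infimum, over all walks from `u` to `v`, of the sum of the weights of traversed edges. -/
noncomputable def wdist {V : Type*} (G : SimpleGraph V) (w : Sym2 V → ℝ) (u v : V) : ℝ :=
  sInf (Set.range fun p : G.Walk u v => (p.edges.map w).sum)

lemma wdist_lb {V : Type*} {G : SimpleGraph V} {w : Sym2 V → ℝ}
    (hpos : ∀ e ∈ G.edgeSet, 0 < w e) (u v : V) :
    ∀ x ∈ Set.range fun p : G.Walk u v => (p.edges.map w).sum, (0:ℝ) ≤ x := by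
  rintro x ⟨p, rfl⟩
  apply List.sum_nonneg
  intro a ha
  rw [List.mem_map] at ha
  obtain ⟨e, he, rfl⟩ := ha
  exact le_of_lt (hpos e (p.edges_subset_edgeSet he))

lemma wdist_nonneg {V : Type*} {G : SimpleGraph V} {w : Sym2 V → ℝ}
    (hconn : G.Connected) (hpos : ∀ e ∈ G.edgeSet, 0 < w e) (u v : V) :
    0 ≤ wdist G w u v :=
  le_csInf (Set.range_nonempty_iff_nonempty.2 ⟨(hconn u v).some⟩) (wdist_lb hpos u v)

lemma wdist_le_walk {V : Type*} {G : SimpleGraph V} {w : Sym2 V → ℝ}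
    (hpos : ∀ e ∈ G.edgeSet, 0 < w e) {u v : V} (p : G.Walk u v) :
    wdist G w u v ≤ (p.edges.map w).sum :=
  csInf_le ⟨0, wdist_lb hpos u v⟩ ⟨p, rfl⟩

lemma wdist_step {V : Type*} {G : SimpleGraph V} {w : Sym2 V → ℝ}
    (hconn : G.Connected) (hpos : ∀ e ∈ G.edgeSet, 0 < w e)
    (s : V) {a b : V} (hab : G.Adj a b) :
    wdist G w s b ≤ wdist G w s a + w s(a, b) := by
  have h : ∀ x ∈ Set.range fun p : G.Walk s a => (p.edges.map w).sum,
      wdist G w s b - w s(a, b) ≤ x := by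
    rintro x ⟨p, rfl⟩
    have := wdist_le_walk (w := w) hpos (p.concat hab)
    rw [SimpleGraph.Walk.edges_concat, List.map_concat, List.sum_concat] at this
    linarith
  have := le_csInf (Set.range_nonempty_iff_nonempty.2 ⟨(hconn s a).some⟩) h
  have h2 : wdist G w s b - w s(a, b) ≤ wdist G w s a := this
  linarith

/-- If the two agents can meet inside an edge `{vA, vB}` at time `T` (agent `A` entering from
`vA` at time `tA`, agent `B` entering from `vB` at time `tB`, passing each other at time `T`),
then there exists a vertex `u` with `T_RV(u) = max (d_A(s_A,u)) (d_B(s_B,u)) ≤ 2T`. -/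
theorem stmt_0 {V : Type*} [Fintype V] (G : SimpleGraph V) (hconn : G.Connected)
    (wA wB : Sym2 V → ℝ)
    (hposA : ∀ e ∈ G.edgeSet, 0 < wA e) (hposB : ∀ e ∈ G.edgeSet, 0 < wB e)
    (sA sB : V) (hne : sA ≠ sB)
    (vA vB : V) (hadj : G.Adj vA vB)
    (tA tB T : ℝ)
    (htA1 : wdist G wA sA vA ≤ tA) (htA2 : tA ≤ T)
    (htB1 : wdist G wB sB vB ≤ tB) (htB2 : tB ≤ T)
    (hmeet : (T - tA) / wA s(vA, vB) + (T - tB) / wB s(vA, vB) = 1) :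
    ∃ u : V, max (wdist G wA sA u) (wdist G wB sB u) ≤ 2 * T := by
  have he : s(vA, vB) ∈ G.edgeSet := hadj
  have hwA : 0 < wA s(vA, vB) := hposA _ he
  have hwB : 0 < wB s(vA, vB) := hposB _ he
  have hAnn : 0 ≤ wdist G wA sA vA := wdist_nonneg hconn hposA sA vA
  have hBnn : 0 ≤ wdist G wB sB vB := wdist_nonneg hconn hposB sB vB
  have hT : 0 ≤ T := by linarith
  rcases le_or_gt (1/2 : ℝ) ((T - tB) / wB s(vA, vB)) with h | h
  · -- B's remaining fraction is large: meet at vA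
    refine ⟨vA, max_le (by linarith) ?_⟩
    have hwBle : wB s(vA, vB) ≤ 2 * (T - tB) := by
      rw [le_div_iff₀ hwB] at h; linarith
    have := wdist_step hconn hposB sB hadj.symm
    rw [Sym2.eq_swap] at this
    linarith
  · -- A's remaining fraction is > 1/2: meet at vB
    refine ⟨vB, max_le ?_ (by linarith)⟩
    have hA : (1/2 : ℝ) ≤ (T - tA) / wA s(vA, vB) := by
      have hBle : (T - tB) / wB s(vA, vB) ≤ 1/2 := le_of_lt h
      linarith
    have hwAle : wA s(vA, vB) ≤ 2 * (T - tA) := by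
      rw [le_div_iff₀ hwA] at hA; linarith
    have := wdist_step hconn hposA sA hadj
    linarith
end

section
/- For each node v and each K ∈ {A,B}, let r_K(v) be the least nonnegative integer r such that d_K(s_K, v) ≤ 2^r, and define T'(v) := max{ 2^{r_A(v)}, 2^{r_B(v)} }. If v_ρ is a node minimizing T' over V, then T_RV(v_ρ) ≤ 2 · min over all u ∈ V of T_RV(u). (This is the correctness core of the rendezvous algorithm with communication complexity O(n log log(Mn)): the node v_ρ computed by both agents from the exchanged exponents r_K(v) satisfies T_RV(v_ρ) ≤ 2·T_RV(u) for the rendezvous node u.) -/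
open SimpleGraph

/-- The weighted shortest-path distance from `u` to `v` in `G` with edge weights `w`:
the infimum, over all walks from `u` to `v`, of the sum of the weights of traversed edges. -/
noncomputable def wdistN {V : Type*} (G : SimpleGraph V) (w : Sym2 V → ℕ) (u v : V) : ℕ :=
  sInf (Set.range fun p : G.Walk u v => (p.edges.map w).sum)

/-- `r_K(v)`: the least nonnegative integer `r` such that `d_K(s_K, v) ≤ 2^r`. -/
noncomputable def rexp {V : Type*} (G : SimpleGraph V) (w : Sym2 V → ℕ) (s v : V) : ℕ :=
  sInf {r : ℕ | wdistN G w s v ≤ 2 ^ r}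

/-- `T'(v) := max{2^{r_A(v)}, 2^{r_B(v)}}`. -/
noncomputable def Texp {V : Type*} (G : SimpleGraph V) (wA wB : Sym2 V → ℕ) (sA sB v : V) : ℕ :=
  max (2 ^ rexp G wA sA v) (2 ^ rexp G wB sB v)


/-!
The exponent `r_K(v)` is `⌈log₂ d_K(s_K, v)⌉`, and `2 ^ ⌈log₂ ·⌉` is monotone, so
`T'(v) = 2 ^ ⌈log₂ T_RV(v)⌉`. Hence `T_RV(v) ≤ T'(v)` always, and `T'(u) ≤ 2 T_RV(u)` as soon as
`T_RV(u) ≥ 1`, which holds for every `u` because the starting nodes are distinct, the graph is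
connected and the weights are positive. Then `T_RV(v_ρ) ≤ T'(v_ρ) ≤ T'(u) ≤ 2 T_RV(u)`.
-/

theorem Nat.pow_clog_le_mul_self {b n : ℕ} (hb : 1 < b) (hn : n ≠ 0) :
    b ^ Nat.clog b n ≤ b * n := by
  rcases le_or_gt n 1 with hn1 | hn1
  · rw [Nat.clog_of_right_le_one hn1, pow_zero]
    nlinarith [Nat.pos_of_ne_zero hn]
  · have hpred := Nat.pow_pred_clog_lt_self hb hn1
    calc b ^ Nat.clog b n = b * b ^ (Nat.clog b n).pred := by
          rw [← pow_succ', Nat.succ_pred_eq_of_pos (Nat.clog_pos hb hn1)]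
      _ ≤ b * n := Nat.mul_le_mul_left b hpred.le

section Rendezvous

variable {V : Type*} {G : SimpleGraph V}

lemma sum_edge_weights_pos {w : Sym2 V → ℕ} (hpos : ∀ e ∈ G.edgeSet, 0 < w e) :
    ∀ {s v : V} (p : G.Walk s v), s ≠ v → 0 < (p.edges.map w).sum
  | _, _, .nil, h => absurd rfl h
  | _, _, .cons hadj _, _ => by
    rw [Walk.edges_cons, List.map_cons, List.sum_cons]
    exact Nat.add_pos_left (hpos _ hadj) _

lemma wdistN_pos (hconn : G.Connected) {w : Sym2 V → ℕ} (hpos : ∀ e ∈ G.edgeSet, 0 < w e)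
    {s v : V} (h : s ≠ v) : 0 < wdistN G w s v := by
  obtain ⟨p, hp⟩ := Nat.sInf_mem (⟨_, (hconn s v).some, rfl⟩ :
    (Set.range fun p : G.Walk s v => (p.edges.map w).sum).Nonempty)
  rw [wdistN, ← hp]
  exact sum_edge_weights_pos hpos p h

lemma rexp_eq_clog (G : SimpleGraph V) (w : Sym2 V → ℕ) (s v : V) :
    rexp G w s v = Nat.clog 2 (wdistN G w s v) := by
  simp only [rexp, ← Nat.clog_le_iff_le_pow one_lt_two]
  exact csInf_Ici

variable (G) in
noncomputable def rendezvousTime (wA wB : Sym2 V → ℕ) (sA sB v : V) : ℕ :=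
  max (wdistN G wA sA v) (wdistN G wB sB v)

lemma Texp_eq_two_pow_clog_rendezvousTime (wA wB : Sym2 V → ℕ) (sA sB v : V) :
    Texp G wA wB sA sB v = 2 ^ Nat.clog 2 (rendezvousTime G wA wB sA sB v) := by
  rw [Texp, rexp_eq_clog, rexp_eq_clog, rendezvousTime, (Nat.clog_monotone 2).map_max,
    (pow_right_mono₀ one_le_two).map_max]

lemma rendezvousTime_pos (hconn : G.Connected) {wA wB : Sym2 V → ℕ}
    (hposA : ∀ e ∈ G.edgeSet, 0 < wA e) (hposB : ∀ e ∈ G.edgeSet, 0 < wB e)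
    {sA sB : V} (hne : sA ≠ sB) (u : V) : 0 < rendezvousTime G wA wB sA sB u := by
  rcases eq_or_ne sA u with rfl | hAu
  · exact lt_max_of_lt_right (wdistN_pos hconn hposB hne.symm)
  · exact lt_max_of_lt_left (wdistN_pos hconn hposA hAu)

end Rendezvous

theorem stmt_3_general {V : Type*} (G : SimpleGraph V) (hconn : G.Connected)
    (wA wB : Sym2 V → ℕ)
    (hposA : ∀ e ∈ G.edgeSet, 0 < wA e) (hposB : ∀ e ∈ G.edgeSet, 0 < wB e)
    (sA sB : V) (hne : sA ≠ sB)
    (vρ : V) (hρ : ∀ v : V, Texp G wA wB sA sB vρ ≤ Texp G wA wB sA sB v) :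
    ∀ u : V, max (wdistN G wA sA vρ) (wdistN G wB sB vρ)
        ≤ 2 * max (wdistN G wA sA u) (wdistN G wB sB u) := by
  intro u
  calc rendezvousTime G wA wB sA sB vρ
      ≤ Texp G wA wB sA sB vρ := by
        rw [Texp_eq_two_pow_clog_rendezvousTime]
        exact Nat.le_pow_clog one_lt_two _
    _ ≤ Texp G wA wB sA sB u := hρ u
    _ ≤ 2 * rendezvousTime G wA wB sA sB u := by
        rw [Texp_eq_two_pow_clog_rendezvousTime]
        exact Nat.pow_clog_le_mul_self one_lt_two (rendezvousTime_pos hconn hposA hposB hne u).ne'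

/-- If `v_ρ` minimizes `T'` over all nodes, then `T_RV(v_ρ) ≤ 2 · min_{u ∈ V} T_RV(u)`,
where `T_RV(v) = max{d_A(s_A,v), d_B(s_B,v)}`. -/
theorem stmt_3 {V : Type*} [Fintype V] (G : SimpleGraph V) (hconn : G.Connected)
    (wA wB : Sym2 V → ℕ)
    (hposA : ∀ e ∈ G.edgeSet, 0 < wA e) (hposB : ∀ e ∈ G.edgeSet, 0 < wB e)
    (sA sB : V) (hne : sA ≠ sB)
    (vρ : V) (hρ : ∀ v : V, Texp G wA wB sA sB vρ ≤ Texp G wA wB sA sB v) :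
    ∀ u : V, max (wdistN G wA sA vρ) (wdistN G wB sB vρ)
        ≤ 2 * max (wdistN G wA sA u) (wdistN G wB sB u) :=
  stmt_3_general G hconn wA wB hposA hposB sA sB hne vρ hρ
end

section
/- Assume the weights are ordered-edge compatible: for all edges e₁, e₂ ∈ E, w_A(e₁) < w_A(e₂) if and only if w_B(e₁) < w_B(e₂). Let τ be a real number such that, for each K ∈ {A,B}, the spanning subgraph of G with edge set { e ∈ E : w_K(e) ≤ τ } contains no path between s_A and s_B. Then for every node u, every path P_A in G from s_A to u and every path P_B in G from s_B to u, either some edge e of P_A satisfies w_A(e) > τ, or some edge e of P_B satisfies w_B(e) > τ. -/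
open SimpleGraph

/-- Ordered edges case. Suppose `τ` is a real threshold such that, for each agent
`K ∈ {A,B}`, the spanning subgraph of `G` keeping only the edges with `w_K(e) ≤ τ`
(i.e. deleting all edges with `w_K(e) > τ`) contains no path between `s_A` and `s_B`.
Then for every node `u`, every path `p_A` from `s_A` to `u` and every path `p_B` from
`s_B` to `u`, some edge of `p_A` has `w_A`-weight above `τ`, or some edge of `p_B`
has `w_B`-weight above `τ`. -/
theorem stmt_5 {V : Type*} [Fintype V] (G : SimpleGraph V) (hconn : G.Connected)
    (wA wB : Sym2 V → ℝ)
    (hposA : ∀ e ∈ G.edgeSet, 0 < wA e) (hposB : ∀ e ∈ G.edgeSet, 0 < wB e)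
    (sA sB : V) (hne : sA ≠ sB)
    (hord : ∀ e₁ ∈ G.edgeSet, ∀ e₂ ∈ G.edgeSet, (wA e₁ < wA e₂ ↔ wB e₁ < wB e₂))
    (τ : ℝ)
    (hcutA : ¬ (G.deleteEdges {e : Sym2 V | τ < wA e}).Reachable sA sB)
    (hcutB : ¬ (G.deleteEdges {e : Sym2 V | τ < wB e}).Reachable sA sB)
    (u : V) (pA : G.Walk sA u) (hpA : pA.IsPath) (pB : G.Walk sB u) (hpB : pB.IsPath) :
    (∃ e ∈ pA.edges, τ < wA e) ∨ (∃ e ∈ pB.edges, τ < wB e) := by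
  by_contra h
  push_neg at h
  obtain ⟨hA, hB⟩ := h
  -- edges of pA satisfy wA ≤ τ; edges of pB satisfy wB ≤ τ
  by_cases hAB : ∀ e ∈ G.edgeSet, wA e ≤ τ → wB e ≤ τ
  · -- both walks live in deleteEdges {τ < wB}
    apply hcutB
    have hA' : ∀ e ∈ pA.edges, e ∈ (G.deleteEdges {e : Sym2 V | τ < wB e}).edgeSet := by
      intro e he
      rw [edgeSet_deleteEdges]
      have heG := pA.edges_subset_edgeSet he
      exact ⟨heG, by simpa using hAB e heG (hA e he)⟩
    have hB' : ∀ e ∈ pB.edges, e ∈ (G.deleteEdges {e : Sym2 V | τ < wB e}).edgeSet := by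
      intro e he
      exact (edgeSet_deleteEdges _).symm ▸ ⟨pB.edges_subset_edgeSet he, by simpa using hB e he⟩
    exact ⟨(pA.transfer _ hA').append (pB.transfer _ hB').reverse⟩
  · -- there is e₀ with wA e₀ ≤ τ < wB e₀; then {wB ≤ τ} ⊆ {wA ≤ τ} on edges
    push_neg at hAB
    obtain ⟨e₀, he₀G, he₀A, he₀B⟩ := hAB
    have hBA : ∀ e ∈ G.edgeSet, wB e ≤ τ → wA e ≤ τ := by
      intro e heG heB
      by_contra hlt
      push_neg at hlt
      have : wB e₀ < wB e := (hord e₀ he₀G e heG).mp (lt_of_le_of_lt he₀A hlt)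
      linarith
    apply hcutA
    have hA' : ∀ e ∈ pA.edges, e ∈ (G.deleteEdges {e : Sym2 V | τ < wA e}).edgeSet := by
      intro e he
      exact (edgeSet_deleteEdges _).symm ▸ ⟨pA.edges_subset_edgeSet he, by simpa using hA e he⟩
    have hB' : ∀ e ∈ pB.edges, e ∈ (G.deleteEdges {e : Sym2 V | τ < wA e}).edgeSet := by
      intro e he
      have heG := pB.edges_subset_edgeSet he
      exact (edgeSet_deleteEdges _).symm ▸ ⟨heG, by simpa using hBA e heG (hB e he)⟩
    exact ⟨(pA.transfer _ hA').append (pB.transfer _ hB').reverse⟩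
end

section
/- Assume the weights are ordered-edge compatible: for all edges e₁, e₂ ∈ E, w_A(e₁) < w_A(e₂) if and only if w_B(e₁) < w_B(e₂). For K ∈ {A,B}, let m(w_K) be the greatest nonnegative integer t such that s_A and s_B lie in different connected components of the spanning subgraph of G with edge set { e ∈ E : w_K(e) ≤ t } (such t exists since weights are positive integers, s_A ≠ s_B, and G is connected). Then for every node u, every path P_A from s_A to u and every path P_B from s_B to u, either some edge e of P_A satisfies w_A(e) > min{ m(w_A), m(w_B) }, or some edge e of P_B satisfies w_B(e) > min{ m(w_B), m(w_A) }. In particular, max{ Σ_{e ∈ P_A} w_A(e), Σ_{e ∈ P_B} w_B(e) } > min{ m(w_A), m(w_B) }. -/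
/-!
Write `G_w(t)` for the spanning subgraph of edges of `w`-weight at most `t`, so that
`m(w)` is the largest level at which `s_A` and `s_B` are still separated. For an edge `e`
of `G` the ordering hypothesis says `G_{w_A}(w_A e) = G_{w_B}(w_B e)`, hence
`w_A e ≤ m(w_A) ↔ w_B e ≤ m(w_B)`. Say `m(w_A) ≤ m(w_B)`. If every edge of `P_A` had
`w_A`-weight at most `m(w_A)` and every edge of `P_B` had `w_B`-weight at most `m(w_A)`,
then all edges of `P_A` followed by `P_B` reversed would have `w_A`-weight at most
`m(w_A)`, connecting `s_A` to `s_B` in `G_{w_A}(m(w_A))`, against the choice of `m(w_A)`.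
-/

open SimpleGraph

/-- `m(w)`: the greatest nonnegative integer `t` such that `s_A` and `s_B` lie in
different connected components of the spanning subgraph of `G` whose edges are the
edges `e` with `w(e) ≤ t` (i.e. after deleting the edges with `w(e) > t`). -/
noncomputable def cutVal {V : Type*} (G : SimpleGraph V) (w : Sym2 V → ℕ) (sA sB : V) : ℕ :=
  sSup {t : ℕ | ¬ (G.deleteEdges {e : Sym2 V | t < w e}).Reachable sA sB}

namespace SimpleGraph

variable {V : Type*} {G : SimpleGraph V}

def sublevel (G : SimpleGraph V) (w : Sym2 V → ℕ) (t : ℕ) : SimpleGraph V :=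
  G.deleteEdges {e | t < w e}

lemma sublevel_mono (w : Sym2 V → ℕ) : Monotone (G.sublevel w) :=
  fun _ _ hst => deleteEdges_anti fun _ he => lt_of_le_of_lt hst he

lemma sublevel_eq_self {w : Sym2 V → ℕ} {t : ℕ} (h : ∀ e ∈ G.edgeSet, w e ≤ t) :
    G.sublevel w t = G :=
  deleteEdges_eq_self.2 <| Set.disjoint_left.2 fun e he hlt => (h e he).not_gt hlt

lemma sublevel_zero {w : Sym2 V → ℕ} (hpos : ∀ e ∈ G.edgeSet, 0 < w e) :
    G.sublevel w 0 = ⊥ := by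
  ext a b
  simpa [sublevel] using fun hab => (hpos s(a, b) hab).ne'

lemma Walk.reachable_sublevel {w : Sym2 V → ℕ} {t : ℕ} {a b : V} (p : G.Walk a b)
    (hp : ∀ e ∈ p.edges, w e ≤ t) : (G.sublevel w t).Reachable a b :=
  (p.toDeleteEdges _ fun e he hlt => (hp e he).not_gt hlt).reachable

lemma sublevel_eq_of_lt_iff_lt {w w' : Sym2 V → ℕ} {e : Sym2 V}
    (hord : ∀ f ∈ G.edgeSet, w e < w f ↔ w' e < w' f) :
    G.sublevel w (w e) = G.sublevel w' (w' e) := by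
  ext a b
  simp only [sublevel, deleteEdges_adj, Set.mem_ofPred_eq, and_congr_right_iff]
  exact fun hab => not_congr (hord _ hab)

end SimpleGraph

section CutVal

variable {V : Type*} {G : SimpleGraph V} {w : Sym2 V → ℕ} {a b : V}

lemma cutVal_comm (G : SimpleGraph V) (w : Sym2 V → ℕ) (a b : V) :
    cutVal G w a b = cutVal G w b a := by
  simp only [cutVal, reachable_comm]

lemma le_cutVal_iff [Finite V] (hconn : G.Connected) (hpos : ∀ e ∈ G.edgeSet, 0 < w e)
    (hne : a ≠ b) {t : ℕ} : t ≤ cutVal G w a b ↔ ¬ (G.sublevel w t).Reachable a b := by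
  set S := {t : ℕ | ¬ (G.sublevel w t).Reachable a b}
  obtain ⟨N, hN⟩ := (G.edgeSet.toFinite.image w).bddAbove
  have hbdd : BddAbove S := ⟨N, fun t ht => not_lt.1 fun hNt => ht <| by
    rw [sublevel_eq_self fun e he => (hN ⟨e, he, rfl⟩).trans hNt.le]
    exact hconn a b⟩
  have hzero : 0 ∈ S := by
    simpa [S, sublevel_zero hpos, reachable_bot] using hne
  have hmem : cutVal G w a b ∈ S := Nat.sSup_mem ⟨0, hzero⟩ hbdd
  exact ⟨fun ht hreach => hmem (hreach.mono (sublevel_mono w ht)), fun ht => le_csSup hbdd ht⟩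

lemma le_cutVal_iff_le_cutVal [Finite V] (hconn : G.Connected) {w' : Sym2 V → ℕ}
    (hpos : ∀ e ∈ G.edgeSet, 0 < w e) (hpos' : ∀ e ∈ G.edgeSet, 0 < w' e) (hne : a ≠ b)
    (hord : ∀ e₁ ∈ G.edgeSet, ∀ e₂ ∈ G.edgeSet, (w e₁ < w e₂ ↔ w' e₁ < w' e₂))
    {e : Sym2 V} (he : e ∈ G.edgeSet) :
    w e ≤ cutVal G w a b ↔ w' e ≤ cutVal G w' a b := by
  rw [le_cutVal_iff hconn hpos hne, le_cutVal_iff hconn hpos' hne,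
    sublevel_eq_of_lt_iff_lt (hord e he)]

lemma exists_lt_weight_of_cutVal_le [Finite V] (hconn : G.Connected) {w' : Sym2 V → ℕ}
    (hpos : ∀ e ∈ G.edgeSet, 0 < w e) (hpos' : ∀ e ∈ G.edgeSet, 0 < w' e) (hne : a ≠ b)
    (hord : ∀ e₁ ∈ G.edgeSet, ∀ e₂ ∈ G.edgeSet, (w e₁ < w e₂ ↔ w' e₁ < w' e₂))
    (hle : cutVal G w a b ≤ cutVal G w' a b) {u : V} (p : G.Walk a u) (q : G.Walk b u) :
    (∃ e ∈ p.edges, cutVal G w a b < w e) ∨ (∃ e ∈ q.edges, cutVal G w a b < w' e) := by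
  by_contra! h
  obtain ⟨hp, hq⟩ := h
  have hpq : ∀ e ∈ (p.append q.reverse).edges, w e ≤ cutVal G w a b := by
    intro e he
    rw [Walk.edges_append, Walk.edges_reverse, List.mem_append, List.mem_reverse] at he
    rcases he with hep | heq
    · exact hp e hep
    · exact (le_cutVal_iff_le_cutVal hconn hpos hpos' hne hord (q.edges_subset_edgeSet heq)).2
        ((hq e heq).trans hle)
  exact (le_cutVal_iff hconn hpos hne).1 le_rfl ((p.append q.reverse).reachable_sublevel hpq)

end CutVal

theorem stmt_6_general {V : Type*} [Fintype V] (G : SimpleGraph V) (hconn : G.Connected)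
    (wA wB : Sym2 V → ℕ)
    (hposA : ∀ e ∈ G.edgeSet, 0 < wA e) (hposB : ∀ e ∈ G.edgeSet, 0 < wB e)
    (sA sB : V) (hne : sA ≠ sB)
    (hord : ∀ e₁ ∈ G.edgeSet, ∀ e₂ ∈ G.edgeSet, (wA e₁ < wA e₂ ↔ wB e₁ < wB e₂))
    (u : V) (pA : G.Walk sA u) (pB : G.Walk sB u) :
    ((∃ e ∈ pA.edges, min (cutVal G wA sA sB) (cutVal G wB sA sB) < wA e) ∨
     (∃ e ∈ pB.edges, min (cutVal G wB sA sB) (cutVal G wA sA sB) < wB e)) ∧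
    min (cutVal G wA sA sB) (cutVal G wB sA sB)
        < max ((pA.edges.map wA).sum) ((pB.edges.map wB).sum) := by
  have heavy : (∃ e ∈ pA.edges, min (cutVal G wA sA sB) (cutVal G wB sA sB) < wA e) ∨
      (∃ e ∈ pB.edges, min (cutVal G wB sA sB) (cutVal G wA sA sB) < wB e) := by
    rcases le_total (cutVal G wA sA sB) (cutVal G wB sA sB) with hle | hle
    · rw [min_eq_left hle, min_eq_right hle]
      exact exists_lt_weight_of_cutVal_le hconn hposA hposB hne hord hle pA pB
    · rw [min_eq_right hle, min_eq_left hle, cutVal_comm G wB]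
      rw [cutVal_comm G wB, cutVal_comm G wA] at hle
      exact (exists_lt_weight_of_cutVal_le hconn hposB hposA hne.symm
        (fun e₁ h₁ e₂ h₂ => (hord e₁ h₁ e₂ h₂).symm) hle pB pA).symm
  refine ⟨heavy, ?_⟩
  rcases heavy with ⟨e, he, hlt⟩ | ⟨e, he, hlt⟩
  · exact hlt.trans_le <| (List.le_sum_of_mem (List.mem_map_of_mem he)).trans (le_max_left _ _)
  · exact (min_comm (cutVal G wA sA sB) _ ▸ hlt).trans_le <|
      (List.le_sum_of_mem (List.mem_map_of_mem he)).trans (le_max_right _ _)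

/-- Ordered edges case with positive integer weights. For every node `u`, every path
`p_A` from `s_A` to `u` and every path `p_B` from `s_B` to `u`, some edge of `p_A` has
`w_A`-weight above `min{m(w_A), m(w_B)}`, or some edge of `p_B` has `w_B`-weight above
`min{m(w_A), m(w_B)}`; in particular
`max{Σ_{e ∈ p_A} w_A(e), Σ_{e ∈ p_B} w_B(e)} > min{m(w_A), m(w_B)}`. -/
theorem stmt_6 {V : Type*} [Fintype V] (G : SimpleGraph V) (hconn : G.Connected)
    (wA wB : Sym2 V → ℕ)
    (hposA : ∀ e ∈ G.edgeSet, 0 < wA e) (hposB : ∀ e ∈ G.edgeSet, 0 < wB e)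
    (sA sB : V) (hne : sA ≠ sB)
    (hord : ∀ e₁ ∈ G.edgeSet, ∀ e₂ ∈ G.edgeSet, (wA e₁ < wA e₂ ↔ wB e₁ < wB e₂))
    (u : V) (pA : G.Walk sA u) (hpA : pA.IsPath) (pB : G.Walk sB u) (hpB : pB.IsPath) :
    ((∃ e ∈ pA.edges, min (cutVal G wA sA sB) (cutVal G wB sA sB) < wA e) ∨
     (∃ e ∈ pB.edges, min (cutVal G wB sA sB) (cutVal G wA sA sB) < wB e)) ∧
    min (cutVal G wA sA sB) (cutVal G wB sA sB)
        < max ((pA.edges.map wA).sum) ((pB.edges.map wB).sum) :=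
  stmt_6_general G hconn wA wB hposA hposB sA sB hne hord u pA pB
end

section
/- Let n ≥ 1 and let X ≥ 2 be an integer. Let G be the complete bipartite graph with vertex set V = { s_A, s_B, v_1, …, v_n } and edge set E = E_A ∪ E_B, where E_K = { {s_K, v_j} : 1 ≤ j ≤ n } for K ∈ {A,B}. Suppose w_A(e) = X for every e ∈ E_B and w_A(e) ∈ {1, X} for every e ∈ E_A, and w_B(e) = X for every e ∈ E_A and w_B(e) ∈ {1, X} for every e ∈ E_B. Then: min over v ∈ V of T_RV(v) equals 1 if there exists an index j with w_A({s_A, v_j}) = 1 and w_B({s_B, v_j}) = 1, and min over v ∈ V of T_RV(v) ≥ X otherwise. -/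
open SimpleGraph

lemma walk_sum_ge {V : Type*} {G : SimpleGraph V} {w : Sym2 V → ℕ} {X : ℕ} {v : V}
    (hv : ∀ x, G.Adj x v → X ≤ w s(x, v)) :
    ∀ {u : V}, u ≠ v → ∀ p : G.Walk u v, X ≤ (p.edges.map w).sum := by
  intro u hne p
  induction p with
  | nil => exact absurd rfl hne
  | @cons a b c h q ih =>
    simp only [Walk.edges_cons, List.map_cons, List.sum_cons]
    by_cases hb : b = c
    · subst hb
      exact le_add_right (hv a h)
    · exact le_add_left (ih hv hb)

lemma wdistN_ge {V : Type*} {G : SimpleGraph V} {w : Sym2 V → ℕ} {X : ℕ} {u v : V}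
    (hv : ∀ x, G.Adj x v → X ≤ w s(x, v)) (hne : u ≠ v) (p : G.Walk u v) :
    X ≤ wdistN G w u v := by
  have hne' : (Set.range fun p : G.Walk u v => (p.edges.map w).sum).Nonempty :=
    ⟨_, p, rfl⟩
  obtain ⟨q, hq⟩ := Nat.sInf_mem hne'
  rw [wdistN, ← hq]
  exact walk_sum_ge hv hne q

lemma wdistN_le_adj {V : Type*} (G : SimpleGraph V) (w : Sym2 V → ℕ) {u v : V}
    (h : G.Adj u v) : wdistN G w u v ≤ w s(u, v) :=
  Nat.sInf_le ⟨Walk.cons h Walk.nil, by simp⟩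

/-- The complete bipartite graph on `{s_A, s_B} ∪ {v_1, …, v_n}`: here
`Sum.inl true = s_A`, `Sum.inl false = s_B` and `Sum.inr j = v_j`. If `w_A` equals `X`
on every edge incident to `s_B` and takes values in `{1, X}` on edges incident to `s_A`,
and symmetrically for `w_B`, then the minimum of `T_RV(v) = max{d_A(s_A,v), d_B(s_B,v)}`
over all vertices `v` equals `1` if there is an index `j` with
`w_A({s_A,v_j}) = w_B({s_B,v_j}) = 1`, and is at least `X` otherwise. -/
theorem stmt_10 (n : ℕ) (hn : 1 ≤ n) (X : ℕ) (hX : 2 ≤ X)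
    (wA wB : Sym2 (Bool ⊕ Fin n) → ℕ)
    (hA1 : ∀ j : Fin n, wA s(Sum.inl false, Sum.inr j) = X)
    (hA2 : ∀ j : Fin n,
      wA s(Sum.inl true, Sum.inr j) = 1 ∨ wA s(Sum.inl true, Sum.inr j) = X)
    (hB1 : ∀ j : Fin n, wB s(Sum.inl true, Sum.inr j) = X)
    (hB2 : ∀ j : Fin n,
      wB s(Sum.inl false, Sum.inr j) = 1 ∨ wB s(Sum.inl false, Sum.inr j) = X) :
    ((∃ j : Fin n,
        wA s(Sum.inl true, Sum.inr j) = 1 ∧ wB s(Sum.inl false, Sum.inr j) = 1) →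
      Finset.univ.inf' ⟨Sum.inl true, Finset.mem_univ _⟩
        (fun v : Bool ⊕ Fin n =>
          max (wdistN (completeBipartiteGraph Bool (Fin n)) wA (Sum.inl true) v)
              (wdistN (completeBipartiteGraph Bool (Fin n)) wB (Sum.inl false) v)) = 1) ∧
    ((¬ ∃ j : Fin n,
        wA s(Sum.inl true, Sum.inr j) = 1 ∧ wB s(Sum.inl false, Sum.inr j) = 1) →
      X ≤ Finset.univ.inf' ⟨Sum.inl true, Finset.mem_univ _⟩
        (fun v : Bool ⊕ Fin n =>
          max (wdistN (completeBipartiteGraph Bool (Fin n)) wA (Sum.inl true) v)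
              (wdistN (completeBipartiteGraph Bool (Fin n)) wB (Sum.inl false) v))) := by
  set G := completeBipartiteGraph Bool (Fin n) with hG
  have hX1 : 1 ≤ X := le_trans (by norm_num) hX
  -- adjacency facts
  have adjA : ∀ j : Fin n, G.Adj (Sum.inl true) (Sum.inr j) := by
    intro j; simp [hG]
  have adjB : ∀ j : Fin n, G.Adj (Sum.inl false) (Sum.inr j) := by
    intro j; simp [hG]
  have j0 : Fin n := ⟨0, hn⟩
  -- all weights ≥ 1
  have wApos : ∀ x y : Bool ⊕ Fin n, G.Adj x y → 1 ≤ wA s(x, y) := by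
    rintro (b | j) (b' | j') h <;> simp [hG] at h
    · rcases b with _ | _
      · rw [hA1 j']; exact hX1
      · rcases hA2 j' with h' | h' <;> rw [h'] <;> exact hX1
    · rw [Sym2.eq_swap]
      rcases b' with _ | _
      · rw [hA1 j]; exact hX1
      · rcases hA2 j with h' | h' <;> rw [h'] <;> exact hX1
  have wBpos : ∀ x y : Bool ⊕ Fin n, G.Adj x y → 1 ≤ wB s(x, y) := by
    rintro (b | j) (b' | j') h <;> simp [hG] at h
    · rcases b with _ | _
      · rcases hB2 j' with h' | h' <;> rw [h'] <;> exact hX1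
      · rw [hB1 j']; exact hX1
    · rw [Sym2.eq_swap]
      rcases b' with _ | _
      · rcases hB2 j with h' | h' <;> rw [h'] <;> exact hX1
      · rw [hB1 j]; exact hX1
  constructor
  · rintro ⟨j, hjA, hjB⟩
    apply le_antisymm
    · calc Finset.univ.inf' _ _ ≤ _ :=
            Finset.inf'_le _ (Finset.mem_univ (Sum.inr j : Bool ⊕ Fin n))
        _ ≤ 1 := by
            apply max_le
            · calc wdistN G wA (Sum.inl true) (Sum.inr j)
                    ≤ wA s(Sum.inl true, Sum.inr j) := wdistN_le_adj G wA (adjA j)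
                _ = 1 := hjA
            · calc wdistN G wB (Sum.inl false) (Sum.inr j)
                    ≤ wB s(Sum.inl false, Sum.inr j) := wdistN_le_adj G wB (adjB j)
                _ = 1 := hjB
    · apply Finset.le_inf'
      rintro (b | k) -
      · rcases b with _ | _
        · -- v = s_B = inl false : use dA ≥ 1
          refine le_max_of_le_left ?_
          exact wdistN_ge (fun x h => wApos x _ h) (by simp)
            (Walk.cons (adjA j0) (Walk.cons ((adjB j0).symm) Walk.nil))
        · -- v = s_A : use dB ≥ 1
          refine le_max_of_le_right ?_
          exact wdistN_ge (fun x h => wBpos x _ h) (by simp)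
            (Walk.cons (adjB j0) (Walk.cons ((adjA j0).symm) Walk.nil))
      · refine le_max_of_le_left ?_
        exact wdistN_ge (fun x h => wApos x _ h) (by simp)
          (Walk.cons (adjA k) Walk.nil)
  · intro hno
    push_neg at hno
    apply Finset.le_inf'
    rintro (b | k) -
    · rcases b with _ | _
      · -- v = s_B : every edge into s_B has wA = X
        refine le_max_of_le_left ?_
        refine wdistN_ge ?_ (by simp)
          (Walk.cons (adjA j0) (Walk.cons ((adjB j0).symm) Walk.nil))
        rintro (b' | j') h
        · simp [hG] at h
        · rw [Sym2.eq_swap, hA1 j']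
      · -- v = s_A : every edge into s_A has wB = X
        refine le_max_of_le_right ?_
        refine wdistN_ge ?_ (by simp)
          (Walk.cons (adjB j0) (Walk.cons ((adjA j0).symm) Walk.nil))
        rintro (b' | j') h
        · simp [hG] at h
        · rw [Sym2.eq_swap, hB1 j']
    · -- v = v_k
      rcases hA2 k with hk | hk
      · -- then wB s(sB, vk) = X
        have hkB : wB s(Sum.inl false, Sum.inr k) = X := by
          rcases hB2 k with h' | h'
          · exact absurd h' (hno k hk)
          · exact h'
        refine le_max_of_le_right ?_
        refine wdistN_ge ?_ (by simp) (Walk.cons (adjB k) Walk.nil)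
        rintro (b' | j') h
        · rcases b' with _ | _
          · rw [hkB]
          · rw [hB1 k]
        · simp [hG] at h
      · refine le_max_of_le_left ?_
        refine wdistN_ge ?_ (by simp) (Walk.cons (adjA k) Walk.nil)
        rintro (b' | j') h
        · rcases b' with _ | _
          · rw [hA1 k]
          · rw [hk]
        · simp [hG] at h
end

section
/- Let n ≥ 1, let X ≥ 2 be an integer, and fix j ∈ {1, …, n}. Let G be the complete bipartite graph with vertex set V = { s_A, s_B, v_1, …, v_n } and edges {s_A, v_i} and {s_B, v_i} for all 1 ≤ i ≤ n. Define w_A({s_A, v_i}) = 1 for all i and w_A({s_B, v_i}) = X for all i; define w_B({s_A, v_i}) = X for all i, w_B({s_B, v_j}) = 1, and w_B({s_B, v_i}) = X for all i ≠ j. Then T_RV(v_j) = 1, while T_RV(v) ≥ X for every vertex v ≠ v_j; in particular, v_j is the unique rendezvous node and the optimal rendezvous time at a node equals 1. -/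
open SimpleGraph

lemma walk_sum_lower {V : Type*} {G : SimpleGraph V} (w : Sym2 V → ℕ) (X : ℕ) :
    ∀ {u v : V} (p : G.Walk u v), u ≠ v → (∀ x, G.Adj v x → X ≤ w s(v, x)) →
      X ≤ (p.edges.map w).sum := by
  intro u v p
  induction p with
  | nil => intro h _; exact absurd rfl h
  | @cons a b c h q ih =>
    intro _ hw
    simp only [Walk.edges_cons, List.map_cons, List.sum_cons]
    by_cases hb : b = c
    · subst hb
      have h1 := hw a h.symm
      rw [Sym2.eq_swap] at h1
      exact le_trans h1 (Nat.le_add_right _ _)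
    · exact le_trans (ih hb hw) (Nat.le_add_left _ _)

lemma wdist_ge {V : Type*} {G : SimpleGraph V} (w : Sym2 V → ℕ) (X : ℕ) {u v : V}
    (hne : Nonempty (G.Walk u v)) (huv : u ≠ v)
    (hw : ∀ x, G.Adj v x → X ≤ w s(v, x)) : X ≤ wdistN G w u v := by
  apply le_csInf (Set.range_nonempty _)
  rintro _ ⟨p, rfl⟩
  exact walk_sum_lower w X p huv hw

lemma wdist_le {V : Type*} {G : SimpleGraph V} (w : Sym2 V → ℕ) {u v : V}
    (h : G.Adj u v) : wdistN G w u v ≤ w s(u, v) := by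
  have : (((Walk.cons h Walk.nil).edges.map w).sum) = w s(u, v) := by simp
  exact this ▸ Nat.sInf_le ⟨Walk.cons h Walk.nil, this⟩

/-- The complete bipartite graph on `{s_A, s_B} ∪ {v_1, …, v_n}`: here
`Sum.inl true = s_A`, `Sum.inl false = s_B` and `Sum.inr i = v_i`. With
`w_A({s_A,v_i}) = 1`, `w_A({s_B,v_i}) = X`, `w_B({s_A,v_i}) = X` for all `i`,
`w_B({s_B,v_j}) = 1`, and `w_B({s_B,v_i}) = X` for `i ≠ j`, we have `T_RV(v_j) = 1`
while `T_RV(v) ≥ X` for every vertex `v ≠ v_j` (so `v_j` is the unique rendezvous node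
and the optimal node-rendezvous time equals `1`),
where `T_RV(v) = max{d_A(s_A,v), d_B(s_B,v)}`. -/
theorem stmt_11 (n : ℕ) (hn : 1 ≤ n) (X : ℕ) (hX : 2 ≤ X) (j : Fin n)
    (wA wB : Sym2 (Bool ⊕ Fin n) → ℕ)
    (hA1 : ∀ i : Fin n, wA s(Sum.inl true, Sum.inr i) = 1)
    (hA2 : ∀ i : Fin n, wA s(Sum.inl false, Sum.inr i) = X)
    (hB1 : ∀ i : Fin n, wB s(Sum.inl true, Sum.inr i) = X)
    (hB2 : wB s(Sum.inl false, Sum.inr j) = 1)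
    (hB3 : ∀ i : Fin n, i ≠ j → wB s(Sum.inl false, Sum.inr i) = X) :
    max (wdistN (completeBipartiteGraph Bool (Fin n)) wA (Sum.inl true) (Sum.inr j))
        (wdistN (completeBipartiteGraph Bool (Fin n)) wB (Sum.inl false) (Sum.inr j)) = 1 ∧
    ∀ v : Bool ⊕ Fin n, v ≠ Sum.inr j →
      X ≤ max (wdistN (completeBipartiteGraph Bool (Fin n)) wA (Sum.inl true) v)
              (wdistN (completeBipartiteGraph Bool (Fin n)) wB (Sum.inl false) v) := by
  set G := completeBipartiteGraph Bool (Fin n) with hG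
  have hadj : ∀ (b : Bool) (i : Fin n), G.Adj (Sum.inl b) (Sum.inr i) := by
    intro b i; simp [hG]
  have i0 : Fin n := ⟨0, hn⟩
  -- walks connecting inl to inl
  have hwalk : ∀ (b b' : Bool), Nonempty (G.Walk (Sum.inl b) (Sum.inl b')) :=
    fun b b' => ⟨Walk.cons (hadj b i0) (Walk.cons (hadj b' i0).symm Walk.nil)⟩
  have key1 : ∀ (u : Bool ⊕ Fin n) (i : Fin n) (w : Sym2 (Bool ⊕ Fin n) → ℕ) (Y : ℕ),
      u ≠ Sum.inr i →
      (∀ b : Bool, Y ≤ w s(Sum.inl b, Sum.inr i)) →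
      Y ≤ wdistN G w u (Sum.inr i) := by
    intro u i w Y hu hw
    refine wdist_ge w Y ?_ hu ?_
    · rcases u with b | i'
      · exact ⟨Walk.cons (hadj b i) Walk.nil⟩
      · exact ⟨Walk.cons (hadj true i').symm (Walk.cons (hadj true i) Walk.nil)⟩
    · rintro (b | i') h
      · rw [Sym2.eq_swap]; exact hw b
      · simp [hG] at h
  have dA1 : wdistN G wA (Sum.inl true) (Sum.inr j) = 1 := by
    refine le_antisymm ?_ ?_
    · have := wdist_le wA (hadj true j)
      rwa [hA1 j] at this
    · refine key1 _ j wA 1 (by simp) ?_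
      intro b; cases b
      · rw [hA2 j]; omega
      · rw [hA1 j]
  have dB1 : wdistN G wB (Sum.inl false) (Sum.inr j) = 1 := by
    refine le_antisymm ?_ ?_
    · have := wdist_le wB (hadj false j)
      rwa [hB2] at this
    · refine key1 _ j wB 1 (by simp) ?_
      intro b; cases b
      · rw [hB2]
      · rw [hB1 j]; omega
  refine ⟨by rw [dA1, dB1]; simp, ?_⟩
  rintro (b | i) hv
  · cases b
    · -- v = s_B : use wA side
      refine le_trans ?_ (le_max_left _ _)
      refine wdist_ge wA X (hwalk true false) (by simp) ?_
      rintro (b' | i') h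
      · simp [hG] at h
      · rw [hA2 i']
    · -- v = s_A : use wB side
      refine le_trans ?_ (le_max_right _ _)
      refine wdist_ge wB X (hwalk false true) (by simp) ?_
      rintro (b' | i') h
      · simp [hG] at h
      · rw [hB1 i']
  · -- v = v_i, i ≠ j : use wB side
    have hij : i ≠ j := fun h => hv (by rw [h])
    refine le_trans ?_ (le_max_right _ _)
    refine key1 _ i wB X (by simp) ?_
    intro b; cases b
    · rw [hB3 i hij]
    · rw [hB1 i]
end

section
/- In the graph G_j of the ordered-edges lower-bound family (with parameters k ≥ 3, X = k⁴ and any j ∈ {1,…,k}), let u be the internal vertex of the path H_j adjacent to s_A. Then d_A(s_A, u) ≤ X + k² + 2k and d_B(s_B, u) ≤ X + k³ + k² + k + 1; consequently min over v ∈ V of T_RV(v) ≤ max{ d_A(s_A,u), d_B(s_B,u) } < 2X. -/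
open SimpleGraph

/-- The graph of the ordered-edges lower-bound family: vertices are
`s_A = Sum.inl true`, `s_B = Sum.inl false`, and the internal vertices
`Sum.inr (j', i)` (for `j' : Fin k`, `i : Fin (k+1)`) of `k` internally disjoint paths
`H_{j'}` joining `s_A` and `s_B`, each consisting of `k + 2` edges:
`s_A — (j',0) — (j',1) — ⋯ — (j',k) — s_B`. -/
def lowerBoundGraph (k : ℕ) : SimpleGraph (Bool ⊕ (Fin k × Fin (k + 1))) :=
  SimpleGraph.fromRel (fun x y =>
    (∃ j' : Fin k, x = Sum.inl true ∧ y = Sum.inr (j', 0)) ∨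
    (∃ (j' : Fin k) (i i' : Fin (k + 1)), (i' : ℕ) = (i : ℕ) + 1 ∧
      x = Sum.inr (j', i) ∧ y = Sum.inr (j', i')) ∨
    (∃ j' : Fin k, x = Sum.inl false ∧ y = Sum.inr (j', Fin.last k)))

/-- The weight that agent `B` assigns to the edge with (1-indexed) label `L` in the
graph `G_j` with parameters `k`, `X` and (1-indexed) `J = j`:
`L` if `L ≤ Jk`; `X + L` if `Jk < L ≤ k² + k − J + 1`; `kX + L` otherwise. -/
def wBval (k X J L : ℕ) : ℕ :=
  if L ≤ J * k then L else if L ≤ k * k + k - J + 1 then X + L else k * X + L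


lemma wdistN_le_walk {V : Type*} (G : SimpleGraph V) (w : Sym2 V → ℕ) {u v : V}
    (p : G.Walk u v) : wdistN G w u v ≤ (p.edges.map w).sum :=
  Nat.sInf_le ⟨p, rfl⟩

lemma walkDown (k X : ℕ) (j : Fin k)
    (wB : Sym2 (Bool ⊕ (Fin k × Fin (k + 1))) → ℕ)
    (hB2 : ∀ (j' : Fin k) (i i' : Fin (k + 1)), (i' : ℕ) = (i : ℕ) + 1 →
      wB s(Sum.inr (j', i), Sum.inr (j', i')) = wBval k X ((j : ℕ) + 1) ((j' : ℕ) * k + (i : ℕ) + 1)) :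
    ∀ n (hn : n < k + 1),
      ∃ p : (lowerBoundGraph k).Walk (Sum.inr (j, ⟨n, hn⟩)) (Sum.inr (j, 0)),
        (p.edges.map wB).sum ≤ n * (k * k) := by
  intro n
  induction n with
  | zero =>
    intro hn
    exact ⟨Walk.nil.copy (by norm_num) rfl, by simp⟩
  | succ m ih =>
    intro hn
    have hm : m < k + 1 := by omega
    obtain ⟨p, hp⟩ := ih hm
    have hadj : (lowerBoundGraph k).Adj (Sum.inr (j, ⟨m + 1, hn⟩)) (Sum.inr (j, ⟨m, hm⟩)) := by
      rw [lowerBoundGraph, fromRel_adj]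
      refine ⟨by simp [Fin.ext_iff], Or.inr (Or.inr (Or.inl ⟨j, ⟨m, hm⟩, ⟨m + 1, hn⟩, rfl, rfl, rfl⟩))⟩
    refine ⟨Walk.cons hadj p, ?_⟩
    have hw : wB s(Sum.inr (j, ⟨m + 1, hn⟩), Sum.inr (j, ⟨m, hm⟩))
        = wBval k X ((j : ℕ) + 1) ((j : ℕ) * k + m + 1) := by
      rw [Sym2.eq_swap]; exact hB2 j ⟨m, hm⟩ ⟨m + 1, hn⟩ rfl
    have hjk : ((j : ℕ) + 1) * k ≤ k * k := Nat.mul_le_mul_right k (by omega)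
    have hL : (j : ℕ) * k + m + 1 ≤ ((j : ℕ) + 1) * k := by
      have : m + 1 ≤ k := by omega
      rw [add_mul, one_mul]; omega
    have hval : wBval k X ((j : ℕ) + 1) ((j : ℕ) * k + m + 1) = (j : ℕ) * k + m + 1 := by
      rw [wBval, if_pos hL]
    simp only [Walk.edges_cons, List.map_cons, List.sum_cons, hw, hval]
    have : (j : ℕ) * k + m + 1 ≤ k * k := le_trans hL hjk
    calc (j : ℕ) * k + m + 1 + (p.edges.map wB).sum ≤ k * k + m * (k * k) := by omega
      _ = (m + 1) * (k * k) := by ring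

/-- In the graph `G_j` of the ordered-edges lower-bound family (`k ≥ 3`, `X = k⁴`,
`j ∈ {1,…,k}` represented 0-indexed as `j : Fin k`), where the edge labels are:
`k² + k + j' + 1` on the edge `s_A — (j',0)`, `j'·k + i + 1` on the edge
`(j',i) — (j',i+1)`, and `k² + k − j'` on the edge `(j',k) — s_B` (0-indexed `j'`),
with `w_A(e_L) = X + L` and `w_B(e_L) = wBval k X (j+1) L`; if `u = (j, 0)` is the
internal vertex of `H_j` adjacent to `s_A`, then `d_A(s_A, u) ≤ X + k² + 2k` and
`d_B(s_B, u) ≤ X + k³ + k² + k + 1`; consequently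
`min_{v} T_RV(v) ≤ max{d_A(s_A,u), d_B(s_B,u)} < 2X`. -/
theorem stmt_12 (k : ℕ) (hk : 3 ≤ k) (X : ℕ) (hX : X = k ^ 4) (j : Fin k)
    (wA wB : Sym2 (Bool ⊕ (Fin k × Fin (k + 1))) → ℕ)
    (hA1 : ∀ j' : Fin k,
      wA s(Sum.inl true, Sum.inr (j', 0)) = X + (k * k + k + (j' : ℕ) + 1))
    (hA2 : ∀ (j' : Fin k) (i i' : Fin (k + 1)), (i' : ℕ) = (i : ℕ) + 1 →
      wA s(Sum.inr (j', i), Sum.inr (j', i')) = X + ((j' : ℕ) * k + (i : ℕ) + 1))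
    (hA3 : ∀ j' : Fin k,
      wA s(Sum.inl false, Sum.inr (j', Fin.last k)) = X + (k * k + k - (j' : ℕ)))
    (hB1 : ∀ j' : Fin k,
      wB s(Sum.inl true, Sum.inr (j', 0)) = wBval k X ((j : ℕ) + 1) (k * k + k + (j' : ℕ) + 1))
    (hB2 : ∀ (j' : Fin k) (i i' : Fin (k + 1)), (i' : ℕ) = (i : ℕ) + 1 →
      wB s(Sum.inr (j', i), Sum.inr (j', i')) = wBval k X ((j : ℕ) + 1) ((j' : ℕ) * k + (i : ℕ) + 1))
    (hB3 : ∀ j' : Fin k,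
      wB s(Sum.inl false, Sum.inr (j', Fin.last k)) = wBval k X ((j : ℕ) + 1) (k * k + k - (j' : ℕ))) :
    wdistN (lowerBoundGraph k) wA (Sum.inl true) (Sum.inr (j, 0)) ≤ X + k ^ 2 + 2 * k ∧
    wdistN (lowerBoundGraph k) wB (Sum.inl false) (Sum.inr (j, 0))
        ≤ X + k ^ 3 + k ^ 2 + k + 1 ∧
    Finset.univ.inf' ⟨Sum.inl true, Finset.mem_univ _⟩
        (fun v : Bool ⊕ (Fin k × Fin (k + 1)) =>
          max (wdistN (lowerBoundGraph k) wA (Sum.inl true) v)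
              (wdistN (lowerBoundGraph k) wB (Sum.inl false) v))
      ≤ max (wdistN (lowerBoundGraph k) wA (Sum.inl true) (Sum.inr (j, 0)))
            (wdistN (lowerBoundGraph k) wB (Sum.inl false) (Sum.inr (j, 0))) ∧
    max (wdistN (lowerBoundGraph k) wA (Sum.inl true) (Sum.inr (j, 0)))
        (wdistN (lowerBoundGraph k) wB (Sum.inl false) (Sum.inr (j, 0))) < 2 * X := by
  have hj : (j : ℕ) < k := j.isLt
  have hk2 : k ^ 2 = k * k := sq k
  have hk3 : k ^ 3 = k * (k * k) := by ring
  -- distance for A: single edge s_A — (j,0)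
  have hd_A : wdistN (lowerBoundGraph k) wA (Sum.inl true) (Sum.inr (j, 0))
      ≤ X + k ^ 2 + 2 * k := by
    have hadj : (lowerBoundGraph k).Adj (Sum.inl true) (Sum.inr (j, 0)) := by
      rw [lowerBoundGraph, fromRel_adj]
      exact ⟨by simp, Or.inl (Or.inl ⟨j, rfl, rfl⟩)⟩
    have hle := wdistN_le_walk (lowerBoundGraph k) wA (Walk.cons hadj Walk.nil)
    simp only [Walk.edges_cons, Walk.edges_nil, List.map_cons, List.map_nil,
      List.sum_cons, List.sum_nil, hA1 j] at hle
    omega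
  -- distance for B: path from s_B down H_j to (j,0)
  have hd_B : wdistN (lowerBoundGraph k) wB (Sum.inl false) (Sum.inr (j, 0))
      ≤ X + k ^ 3 + k ^ 2 + k + 1 := by
    obtain ⟨p, hp⟩ := walkDown k X j wB hB2 k (lt_add_one k)
    have hadj : (lowerBoundGraph k).Adj (Sum.inl false) (Sum.inr (j, Fin.last k)) := by
      rw [lowerBoundGraph, fromRel_adj]
      exact ⟨by simp, Or.inl (Or.inr (Or.inr ⟨j, rfl, rfl⟩))⟩
    have hle := wdistN_le_walk (lowerBoundGraph k) wB (Walk.cons hadj p)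
    rw [Walk.edges_cons, List.map_cons, List.sum_cons, hB3 j] at hle
    have hjk : ((j : ℕ) + 1) * k ≤ k * k := Nat.mul_le_mul_right k hj
    have hwv : wBval k X ((j : ℕ) + 1) (k * k + k - (j : ℕ))
        = X + (k * k + k - (j : ℕ)) := by
      rw [wBval, if_neg (by omega), if_pos (by omega)]
    rw [hwv] at hle
    omega
  have h1 : X + k ^ 2 + 2 * k < 2 * X := by subst hX; nlinarith
  have h2 : X + k ^ 3 + k ^ 2 + k + 1 < 2 * X := by subst hX; nlinarith
  exact ⟨hd_A, hd_B, Finset.inf'_le _ (Finset.mem_univ _),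
    max_lt (lt_of_le_of_lt hd_A h1) (lt_of_le_of_lt hd_B h2)⟩
end

section
/- In the graph G_j of the ordered-edges lower-bound family (with parameters k ≥ 1, X = k⁴ and any j ∈ {1,…,k}), every vertex v of G_j that is not an internal vertex of the path H_j (i.e., v = s_A, v = s_B, or v is an internal vertex of some path H_{j'} with j' ≠ j) satisfies max{ d_A(s_A, v), d_B(s_B, v) } > kX/2. Hence any rendezvous at a node in time at most kX/2 must occur at an internal vertex of H_j. -/
open SimpleGraph

lemma potential_walk_le {V : Type*} {G : SimpleGraph V} {w : Sym2 V → ℕ} {φ : V → ℕ}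
    (hφ : ∀ x y, G.Adj x y → φ y ≤ φ x + w s(x, y)) :
    ∀ {u v : V} (p : G.Walk u v), φ v ≤ φ u + (p.edges.map w).sum := by
  intro u v p
  induction p with
  | nil => simp
  | @cons a b c h q ih =>
    simp only [Walk.edges_cons, List.map_cons, List.sum_cons]
    have h2 := hφ a b h
    omega

lemma le_wdistN {V : Type*} {G : SimpleGraph V} {w : Sym2 V → ℕ} {u v : V}
    (h : G.Reachable u v) {c : ℕ}
    (hb : ∀ p : G.Walk u v, c ≤ (p.edges.map w).sum) : c ≤ wdistN G w u v := by
  obtain ⟨p⟩ := h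
  exact le_csInf ⟨_, ⟨p, rfl⟩⟩ (by rintro x ⟨q, rfl⟩; exact hb q)

lemma lbg_adj {k : ℕ} {x y} (h : (lowerBoundGraph k).Adj x y) :
    (∃ j' : Fin k, (x = Sum.inl true ∧ y = Sum.inr (j', 0)) ∨ (y = Sum.inl true ∧ x = Sum.inr (j', 0))) ∨
    (∃ (j' : Fin k) (i i' : Fin (k+1)), (i':ℕ) = (i:ℕ) + 1 ∧
      ((x = Sum.inr (j', i) ∧ y = Sum.inr (j', i')) ∨ (y = Sum.inr (j', i) ∧ x = Sum.inr (j', i')))) ∨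
    (∃ j' : Fin k, (x = Sum.inl false ∧ y = Sum.inr (j', Fin.last k)) ∨ (y = Sum.inl false ∧ x = Sum.inr (j', Fin.last k))) := by
  rw [lowerBoundGraph, fromRel_adj] at h
  obtain ⟨-, h | h⟩ := h <;>
  · rcases h with ⟨j', h1, h2⟩ | ⟨j', i, i', hi, h1, h2⟩ | ⟨j', h1, h2⟩
    · exact Or.inl ⟨j', by tauto⟩
    · exact Or.inr (Or.inl ⟨j', i, i', hi, by tauto⟩)
    · exact Or.inr (Or.inr ⟨j', by tauto⟩)

lemma adj_sA {k : ℕ} (j' : Fin k) :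
    (lowerBoundGraph k).Adj (Sum.inl true) (Sum.inr (j', 0)) := by
  rw [lowerBoundGraph, fromRel_adj]
  exact ⟨by simp, Or.inl (Or.inl ⟨j', rfl, rfl⟩)⟩

lemma adj_mid {k : ℕ} (j' : Fin k) (i i' : Fin (k+1)) (h : (i':ℕ) = (i:ℕ) + 1) :
    (lowerBoundGraph k).Adj (Sum.inr (j', i)) (Sum.inr (j', i')) := by
  rw [lowerBoundGraph, fromRel_adj]
  refine ⟨?_, Or.inl (Or.inr (Or.inl ⟨j', i, i', h, rfl, rfl⟩))⟩
  simp only [ne_eq, Sum.inr.injEq, Prod.mk.injEq, not_and]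
  rintro - rfl; omega

lemma adj_sB {k : ℕ} (j' : Fin k) :
    (lowerBoundGraph k).Adj (Sum.inl false) (Sum.inr (j', Fin.last k)) := by
  rw [lowerBoundGraph, fromRel_adj]
  exact ⟨by simp, Or.inl (Or.inr (Or.inr ⟨j', rfl, rfl⟩))⟩

lemma reach_all {k : ℕ} (hk : 1 ≤ k) (v : Bool ⊕ (Fin k × Fin (k+1))) :
    (lowerBoundGraph k).Reachable (Sum.inl true) v := by
  have hmain : ∀ (j' : Fin k) (i : Fin (k+1)),
      (lowerBoundGraph k).Reachable (Sum.inl true) (Sum.inr (j', i)) := by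
    intro j' i
    induction i using Fin.induction with
    | zero => exact (adj_sA j').reachable
    | succ i ih => exact ih.trans (adj_mid j' i.castSucc i.succ (by simp)).reachable
  rcases v with b | ⟨j', i⟩
  · cases b
    · exact (hmain ⟨0, hk⟩ (Fin.last k)).trans ((adj_sB ⟨0, hk⟩).symm).reachable
    · exact Reachable.refl _
  · exact hmain j' i

def phiA (k X : ℕ) : Bool ⊕ (Fin k × Fin (k+1)) → ℕ
  | Sum.inl true => 0
  | Sum.inl false => (k+2)*X
  | Sum.inr (_, i) => ((i:ℕ)+1)*X

def phiB (k X : ℕ) (j : Fin k) : Bool ⊕ (Fin k × Fin (k+1)) → ℕ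
  | Sum.inl true => k*X
  | Sum.inl false => 0
  | Sum.inr (j'', i) =>
      if (j'':ℕ) < (j:ℕ) then k*X else if (j'':ℕ) = (j:ℕ) then X else (k+1-(i:ℕ))*X

lemma wBval_eq_mid {k X J L : ℕ} (h1 : J*k < L) (h2 : L ≤ k*k+k-J+1) :
    wBval k X J L = X + L := by
  rw [wBval, if_neg (Nat.not_le.mpr h1), if_pos h2]

lemma wBval_eq_high {k X J L : ℕ} (h1 : J*k < L) (h2 : k*k+k-J+1 < L) :
    wBval k X J L = k*X + L := by
  rw [wBval, if_neg (Nat.not_le.mpr h1), if_neg (Nat.not_le.mpr h2)]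


lemma arith1 (A B k j i : ℕ) (h1 : B + k ≤ A) (h2 : j + 1 ≤ k) (h3 : i < k) :
    B + i + 1 ≤ A + k - (j + 1) + 1 := by omega

lemma arith2 (A P k j' : ℕ) (hP : P ≤ A) (h : j' < k) : P < A + k - j' := by omega

lemma arith3 (A j j' : ℕ) (h : j' < j) (hA : j + 1 ≤ A) : A - (j + 1) + 1 < A - j' := by omega

lemma arith4 (A j j' : ℕ) (h : j ≤ j') : A - j' ≤ A - (j + 1) + 1 := by omega

lemma arith5 (A k j j' : ℕ) (hj : j + 1 ≤ k) (h : j' + 1 ≤ k) :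
    A + k - (j + 1) + 1 < A + k + j' + 1 := by omega

lemma arith6 (P A a : ℕ) (h : P ≤ A) : P < A + a + 1 := by omega


set_option maxHeartbeats 1000000 in
/-- In the graph `G_j` of the ordered-edges lower-bound family (`k ≥ 1`, `X = k⁴`,
`j ∈ {1,…,k}` represented 0-indexed as `j : Fin k`), where the edge labels are:
`k² + k + j' + 1` on the edge `s_A — (j',0)`, `j'·k + i + 1` on the edge
`(j',i) — (j',i+1)`, and `k² + k − j'` on the edge `(j',k) — s_B` (0-indexed `j'`),
with `w_A(e_L) = X + L` and `w_B(e_L) = wBval k X (j+1) L`; every vertex `v` that is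
not an internal vertex of `H_j` satisfies
`max{d_A(s_A,v), d_B(s_B,v)} > kX/2` (stated as `kX < 2·max{…}`). Hence a rendezvous
at a node in time at most `kX/2` must occur at an internal vertex of `H_j`. -/
theorem stmt_13 (k : ℕ) (hk : 1 ≤ k) (X : ℕ) (hX : X = k ^ 4) (j : Fin k)
    (wA wB : Sym2 (Bool ⊕ (Fin k × Fin (k + 1))) → ℕ)
    (hA1 : ∀ j' : Fin k,
      wA s(Sum.inl true, Sum.inr (j', 0)) = X + (k * k + k + (j' : ℕ) + 1))
    (hA2 : ∀ (j' : Fin k) (i i' : Fin (k + 1)), (i' : ℕ) = (i : ℕ) + 1 →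
      wA s(Sum.inr (j', i), Sum.inr (j', i')) = X + ((j' : ℕ) * k + (i : ℕ) + 1))
    (hA3 : ∀ j' : Fin k,
      wA s(Sum.inl false, Sum.inr (j', Fin.last k)) = X + (k * k + k - (j' : ℕ)))
    (hB1 : ∀ j' : Fin k,
      wB s(Sum.inl true, Sum.inr (j', 0)) = wBval k X ((j : ℕ) + 1) (k * k + k + (j' : ℕ) + 1))
    (hB2 : ∀ (j' : Fin k) (i i' : Fin (k + 1)), (i' : ℕ) = (i : ℕ) + 1 →
      wB s(Sum.inr (j', i), Sum.inr (j', i')) = wBval k X ((j : ℕ) + 1) ((j' : ℕ) * k + (i : ℕ) + 1))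
    (hB3 : ∀ j' : Fin k,
      wB s(Sum.inl false, Sum.inr (j', Fin.last k)) = wBval k X ((j : ℕ) + 1) (k * k + k - (j' : ℕ))) :
    ∀ v : Bool ⊕ (Fin k × Fin (k + 1)), (∀ i : Fin (k + 1), v ≠ Sum.inr (j, i)) →
      k * X < 2 * max (wdistN (lowerBoundGraph k) wA (Sum.inl true) v)
                      (wdistN (lowerBoundGraph k) wB (Sum.inl false) v) := by
  have hX1 : 1 ≤ X := hX ▸ Nat.one_le_pow 4 k hk
  have hjk : (j : ℕ) + 1 ≤ k := j.isLt
  have p1 : ((j : ℕ) + 1) * k ≤ k * k := Nat.mul_le_mul_right k j.isLt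
  -- feasibility of the potential for wA
  have hφA : ∀ x y, (lowerBoundGraph k).Adj x y → phiA k X y ≤ phiA k X x + wA s(x, y) := by
    intro x y h
    rcases lbg_adj h with ⟨j', ⟨rfl, rfl⟩ | ⟨rfl, rfl⟩⟩
      | ⟨j', i, i', hi, ⟨rfl, rfl⟩ | ⟨rfl, rfl⟩⟩
      | ⟨j', ⟨rfl, rfl⟩ | ⟨rfl, rfl⟩⟩
    · rw [hA1]
      simp only [phiA, Fin.val_zero]
      have key : (0 + 1) * X = X := by ring
      rw [key]
      exact le_trans (Nat.le_add_right _ _) (Nat.le_add_left _ _)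
    · rw [Sym2.eq_swap, hA1]
      simp only [phiA]
      exact Nat.zero_le _
    · rw [hA2 j' i i' hi]
      simp only [phiA]
      have key : ((i : ℕ) + 1 + 1) * X = ((i : ℕ) + 1) * X + X := by ring
      rw [hi, key]
      exact Nat.add_le_add_left (Nat.le_add_right _ _) _
    · rw [Sym2.eq_swap, hA2 j' i i' hi]
      simp only [phiA]
      rw [hi]
      have key : ((i : ℕ) + 1 + 1) * X = ((i : ℕ) + 1) * X + X := by ring
      rw [key]
      exact le_trans (Nat.le_add_right _ _) (Nat.le_add_right _ _)
    · rw [hA3]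
      simp only [phiA, Fin.val_last]
      have key : (k + 2) * X = (k + 1) * X + X := by ring
      rw [key]
      exact le_trans (Nat.le_add_right _ _) (Nat.le_add_right _ _)
    · rw [Sym2.eq_swap, hA3]
      simp only [phiA, Fin.val_last]
      have key : (k + 2) * X = (k + 1) * X + X := by ring
      rw [key]
      exact Nat.add_le_add_left (Nat.le_add_right _ _) _
  -- feasibility of the potential for wB
  have hφB : ∀ x y, (lowerBoundGraph k).Adj x y → phiB k X j y ≤ phiB k X j x + wB s(x, y) := by
    intro x y h
    have c1a : ∀ j' : Fin k, ((j : ℕ) + 1) * k < k * k + k + (j' : ℕ) + 1 := fun j' =>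
      arith6 _ (k * k + k) (j' : ℕ) (le_trans p1 (Nat.le_add_right (k * k) k))
    have c2a : ∀ j' : Fin k, k * k + k - ((j : ℕ) + 1) + 1 < k * k + k + (j' : ℕ) + 1 := fun j' =>
      arith5 (k * k) k (j : ℕ) (j' : ℕ) hjk j'.isLt
    rcases lbg_adj h with ⟨j', ⟨rfl, rfl⟩ | ⟨rfl, rfl⟩⟩
      | ⟨j', i, i', hi, ⟨rfl, rfl⟩ | ⟨rfl, rfl⟩⟩
      | ⟨j', ⟨rfl, rfl⟩ | ⟨rfl, rfl⟩⟩
    · -- sA → (j',0), weight is high: k*X + L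
      rw [hB1 j', wBval_eq_high (c1a j') (c2a j')]
      simp only [phiB, Fin.val_zero, Nat.sub_zero]
      split_ifs
      · exact le_trans (Nat.le_add_right _ _) (Nat.le_add_left _ _)
      · have h1 : 1 * X ≤ k * X := Nat.mul_le_mul_right X hk
        rw [one_mul] at h1
        exact le_trans h1 (Nat.le_add_right _ _)
      · have h1 : (k + 1) * X ≤ (k + k) * X := Nat.mul_le_mul_right X (by omega)
        have h2 : (k + k) * X = k * X + k * X := by ring
        rw [h2] at h1
        exact le_trans h1 (Nat.add_le_add_left (Nat.le_add_right _ _) _)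
    · -- (j',0) → sA
      rw [Sym2.eq_swap, hB1 j', wBval_eq_high (c1a j') (c2a j')]
      exact le_trans (Nat.le_add_right _ _) (Nat.le_add_left _ _)
    · -- internal edge, forward
      have hik : (i : ℕ) < k := by have := i'.isLt; omega
      rw [hB2 j' i i' hi]
      rcases Nat.lt_trichotomy (j' : ℕ) (j : ℕ) with hlt | heq | hgt
      · simp only [phiB, if_pos hlt]
        exact Nat.le_add_right _ _
      · simp only [phiB, if_neg (by omega : ¬ (j' : ℕ) < (j : ℕ)), if_pos heq]
        exact Nat.le_add_right _ _
      · have q1 : ((j : ℕ) + 1) * k ≤ (j' : ℕ) * k := Nat.mul_le_mul_right k hgt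
        have q2 : ((j' : ℕ) + 1) * k ≤ k * k := Nat.mul_le_mul_right k j'.isLt
        have q3 : ((j' : ℕ) + 1) * k = (j' : ℕ) * k + k := by ring
        have c1 : ((j : ℕ) + 1) * k < (j' : ℕ) * k + (i : ℕ) + 1 := arith6 _ _ _ q1
        have c2 : (j' : ℕ) * k + (i : ℕ) + 1 ≤ k * k + k - ((j : ℕ) + 1) + 1 :=
          arith1 (k * k) ((j' : ℕ) * k) k (j : ℕ) (i : ℕ) (q3 ▸ q2) hjk hik
        rw [wBval_eq_mid c1 c2]
        simp only [phiB, if_neg (by omega : ¬ (j' : ℕ) < (j : ℕ)),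
          if_neg (by omega : ¬ (j' : ℕ) = (j : ℕ))]
        obtain ⟨d, hd⟩ : ∃ d, (i : ℕ) + d = k := ⟨k - (i : ℕ), by omega⟩
        have e1 : k + 1 - (i' : ℕ) = d := by omega
        have e2 : k + 1 - (i : ℕ) = d + 1 := by omega
        rw [e1, e2]
        have key : (d + 1) * X = d * X + X := by ring
        rw [key]
        exact le_trans (Nat.le_add_right _ _) (Nat.le_add_right _ _)
    · -- internal edge, backward
      have hik : (i : ℕ) < k := by have := i'.isLt; omega
      rw [Sym2.eq_swap, hB2 j' i i' hi]
      rcases Nat.lt_trichotomy (j' : ℕ) (j : ℕ) with hlt | heq | hgt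
      · simp only [phiB, if_pos hlt]
        exact Nat.le_add_right _ _
      · simp only [phiB, if_neg (by omega : ¬ (j' : ℕ) < (j : ℕ)), if_pos heq]
        exact Nat.le_add_right _ _
      · have q1 : ((j : ℕ) + 1) * k ≤ (j' : ℕ) * k := Nat.mul_le_mul_right k hgt
        have q2 : ((j' : ℕ) + 1) * k ≤ k * k := Nat.mul_le_mul_right k j'.isLt
        have q3 : ((j' : ℕ) + 1) * k = (j' : ℕ) * k + k := by ring
        have c1 : ((j : ℕ) + 1) * k < (j' : ℕ) * k + (i : ℕ) + 1 := arith6 _ _ _ q1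
        have c2 : (j' : ℕ) * k + (i : ℕ) + 1 ≤ k * k + k - ((j : ℕ) + 1) + 1 :=
          arith1 (k * k) ((j' : ℕ) * k) k (j : ℕ) (i : ℕ) (q3 ▸ q2) hjk hik
        rw [wBval_eq_mid c1 c2]
        simp only [phiB, if_neg (by omega : ¬ (j' : ℕ) < (j : ℕ)),
          if_neg (by omega : ¬ (j' : ℕ) = (j : ℕ))]
        obtain ⟨d, hd⟩ : ∃ d, (i : ℕ) + d = k := ⟨k - (i : ℕ), by omega⟩
        have e1 : k + 1 - (i' : ℕ) = d := by omega
        have e2 : k + 1 - (i : ℕ) = d + 1 := by omega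
        have key : (d + 1) * X = d * X + X := by ring
        rw [e1, e2, key]
        exact Nat.add_le_add_left (Nat.le_add_right _ _) _
    · -- sB → (j', last)
      have c1 : ((j : ℕ) + 1) * k < k * k + k - (j' : ℕ) :=
        arith2 (k * k) (((j : ℕ) + 1) * k) k (j' : ℕ) p1 j'.isLt
      rw [hB3 j']
      rcases Nat.lt_trichotomy (j' : ℕ) (j : ℕ) with hlt | heq | hgt
      · have c2 : k * k + k - ((j : ℕ) + 1) + 1 < k * k + k - (j' : ℕ) :=
          arith3 (k * k + k) (j : ℕ) (j' : ℕ) hlt (le_trans hjk (Nat.le_add_left _ _))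
        rw [wBval_eq_high c1 c2]
        simp only [phiB, if_pos hlt]
        exact le_trans (Nat.le_add_right _ _) (Nat.le_add_left _ _)
      · have c2 : k * k + k - (j' : ℕ) ≤ k * k + k - ((j : ℕ) + 1) + 1 :=
          arith4 (k * k + k) (j : ℕ) (j' : ℕ) (le_of_eq heq.symm)
        rw [wBval_eq_mid c1 c2]
        simp only [phiB, if_neg (by omega : ¬ (j' : ℕ) < (j : ℕ)), if_pos heq]
        exact le_trans (Nat.le_add_right _ _) (Nat.le_add_left _ _)
      · have c2 : k * k + k - (j' : ℕ) ≤ k * k + k - ((j : ℕ) + 1) + 1 :=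
          arith4 (k * k + k) (j : ℕ) (j' : ℕ) (le_of_lt hgt)
        rw [wBval_eq_mid c1 c2]
        simp only [phiB, if_neg (by omega : ¬ (j' : ℕ) < (j : ℕ)),
          if_neg (by omega : ¬ (j' : ℕ) = (j : ℕ)), Fin.val_last]
        have e1 : k + 1 - k = 1 := by omega
        rw [e1, one_mul]
        exact le_trans (Nat.le_add_right _ _) (Nat.le_add_left _ _)
    · -- (j', last) → sB
      rw [Sym2.eq_swap, hB3 j']
      exact Nat.zero_le _
  -- distance lower bounds
  have dA_lb : ∀ v, phiA k X v ≤ wdistN (lowerBoundGraph k) wA (Sum.inl true) v := by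
    intro v
    refine le_wdistN (reach_all hk v) (fun p => ?_)
    have h := potential_walk_le hφA p
    simpa [phiA] using h
  have dB_lb : ∀ v, phiB k X j v ≤ wdistN (lowerBoundGraph k) wB (Sum.inl false) v := by
    intro v
    refine le_wdistN (((reach_all hk _).symm).trans (reach_all hk v)) (fun p => ?_)
    have h := potential_walk_le hφB p
    simpa [phiB] using h
  have hkX : 1 ≤ k * X := by
    calc 1 = 1 * 1 := by ring
    _ ≤ k * X := Nat.mul_le_mul hk hX1
  intro v hv
  rcases v with b | ⟨j', i⟩
  · cases b
    · -- v = s_B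
      have h := dA_lb (Sum.inl false)
      simp only [phiA] at h
      have hm := le_trans h (le_max_left (wdistN (lowerBoundGraph k) wA (Sum.inl true) (Sum.inl false))
        (wdistN (lowerBoundGraph k) wB (Sum.inl false) (Sum.inl false)))
      have key : (k + 2) * X = k * X + 2 * X := by ring
      rw [key] at hm
      set Y := k * X with hY
      omega
    · -- v = s_A
      have h := dB_lb (Sum.inl true)
      simp only [phiB] at h
      have hm := le_trans h (le_max_right (wdistN (lowerBoundGraph k) wA (Sum.inl true) (Sum.inl true))
        (wdistN (lowerBoundGraph k) wB (Sum.inl false) (Sum.inl true)))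
      set Y := k * X with hY
      omega
  · have hne : (j' : ℕ) ≠ (j : ℕ) := by
      intro h
      exact hv i (by rw [Fin.val_injective h])
    rcases Nat.lt_or_ge (j' : ℕ) (j : ℕ) with hlt | hge
    · have h := dB_lb (Sum.inr (j', i))
      simp only [phiB, if_pos hlt] at h
      have hm := le_trans h (le_max_right (wdistN (lowerBoundGraph k) wA (Sum.inl true) (Sum.inr (j', i)))
        (wdistN (lowerBoundGraph k) wB (Sum.inl false) (Sum.inr (j', i))))
      set Y := k * X with hY
      omega
    · have hgt : (j : ℕ) < (j' : ℕ) := by omega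
      have hA' := dA_lb (Sum.inr (j', i))
      simp only [phiA] at hA'
      have hB' := dB_lb (Sum.inr (j', i))
      simp only [phiB, if_neg (by omega : ¬ (j' : ℕ) < (j : ℕ)),
        if_neg (by omega : ¬ (j' : ℕ) = (j : ℕ))] at hB'
      have hik : (i : ℕ) ≤ k := by have := i.isLt; omega
      obtain ⟨d, hd⟩ : ∃ d, (i : ℕ) + d = k := ⟨k - (i : ℕ), by omega⟩
      have e2 : k + 1 - (i : ℕ) = d + 1 := by omega
      rw [e2] at hB'
      have m1 := le_trans hA' (le_max_left (wdistN (lowerBoundGraph k) wA (Sum.inl true) (Sum.inr (j', i)))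
        (wdistN (lowerBoundGraph k) wB (Sum.inl false) (Sum.inr (j', i))))
      have m2 := le_trans hB' (le_max_right (wdistN (lowerBoundGraph k) wA (Sum.inl true) (Sum.inr (j', i)))
        (wdistN (lowerBoundGraph k) wB (Sum.inl false) (Sum.inr (j', i))))
      have key : ((i : ℕ) + 1) * X + (d + 1) * X = ((i : ℕ) + d + 2) * X := by ring
      rw [hd] at key
      have key2 : (k + 2) * X = k * X + 2 * X := by ring
      rw [key2] at key
      set Y := k * X with hY
      set A := ((i : ℕ) + 1) * X with hAd
      set B := (d + 1) * X with hBd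
      omega
end
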